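/- For any type x, the normalization constant satisfies λ_x = ∏_i d_{A_i}^{−K_x(A_i)}, where the product runs over the elementary types A_i occurring in x, and K_x(A_i) is the parity (mod 2) of the number of arrows '→' plus open parentheses '(' appearing to the right of A_i in the expression of x. In particular λ_x I_x is a deterministic event of type x. -/

import Mathlib

open Matrix Kronecker
open scoped ComplexOrder

/-- Types of higher-order quantum theory. The trivial type `I` is `elem 1`. -/
inductive QT where
  | elem (n : ℕ)
  | arrow (x y : QT)

/-- The index type of the Hilbert space `H_x` associated to a type `x`. -/
def Idx : QT → Type
  | .elem n => Fin n
  | .arrow x y => Idx x × Idx y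

instance idxFintype : (x : QT) → Fintype (Idx x)
  | .elem n => inferInstanceAs (Fintype (Fin n))
  | .arrow x y =>
      letI := idxFintype x; letI := idxFintype y
      inferInstanceAs (Fintype (Idx x × Idx y))

instance idxDecEq : (x : QT) → DecidableEq (Idx x)
  | .elem n => inferInstanceAs (DecidableEq (Fin n))
  | .arrow x y =>
      letI := idxDecEq x; letI := idxDecEq y
      inferInstanceAs (DecidableEq (Idx x × Idx y))

/-- Partial trace over the first tensor factor. -/
noncomputable def ptrA {ι κ : Type} [Fintype ι]
    (M : Matrix (ι × κ) (ι × κ) ℂ) : Matrix κ κ ℂ :=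
  fun k l => ∑ i : ι, M (i, k) (i, l)

/-- Deterministic events of type `x`, defined recursively: for elementary types,
positive unit-trace operators; for `x → y`, positive operators `R` such that
`Tr_x[(Sᵀ ⊗ 1) R] ∈ Det y` for every `S ∈ Det x`. -/
noncomputable def Det : (x : QT) → Set (Matrix (Idx x) (Idx x) ℂ)
  | .elem n => {R | R.PosSemidef ∧ R.trace = 1}
  | .arrow x y =>
      setOf (fun (R : Matrix (Idx x × Idx y) (Idx x × Idx y) ℂ) =>
        R.PosSemidef ∧
        ∀ S ∈ Det x, ptrA ((Sᵀ ⊗ₖ (1 : Matrix (Idx y) (Idx y) ℂ)) * R) ∈ Det y)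

/-- The real subspace of Hermitian operators. -/
noncomputable def hermSub (ι : Type) [Fintype ι] [DecidableEq ι] :
    Submodule ℝ (Matrix ι ι ℂ) where
  carrier := {X | X.IsHermitian}
  add_mem' := fun ha hb => ha.add hb
  zero_mem' := Matrix.isHermitian_zero
  smul_mem' := fun c X hX => by
    show ((c • X)ᴴ = c • X)
    rw [Matrix.conjTranspose_smul, star_trivial, hX.eq]

/-- The real subspace of traceless Hermitian operators. -/
noncomputable def tlHermSub (ι : Type) [Fintype ι] [DecidableEq ι] :
    Submodule ℝ (Matrix ι ι ℂ) where
  carrier := {X | X.IsHermitian ∧ X.trace = 0}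
  add_mem' := fun ha hb => ⟨ha.1.add hb.1, by rw [trace_add, ha.2, hb.2, add_zero]⟩
  zero_mem' := ⟨Matrix.isHermitian_zero, Matrix.trace_zero ι ℂ⟩
  smul_mem' := fun c X hX =>
    ⟨by show ((c • X)ᴴ = c • X)
        rw [Matrix.conjTranspose_smul, star_trivial, hX.1.eq],
     by rw [trace_smul, hX.2, smul_zero]⟩

/-- The Hilbert–Schmidt orthogonal complement of `S` inside `B`. -/
noncomputable def perpWithin {ι : Type} [Fintype ι] [DecidableEq ι]
    (S B : Submodule ℝ (Matrix ι ι ℂ)) : Submodule ℝ (Matrix ι ι ℂ) where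
  carrier := {Z | Z ∈ B ∧ ∀ Y ∈ S, (Y * Z).trace = 0}
  add_mem' := fun ha hb =>
    ⟨B.add_mem ha.1 hb.1, fun Y hY => by
      rw [mul_add, trace_add, ha.2 Y hY, hb.2 Y hY, add_zero]⟩
  zero_mem' := ⟨B.zero_mem, fun Y _ => by simp⟩
  smul_mem' := fun c Z hZ =>
    ⟨B.smul_mem c hZ.1, fun Y hY => by
      rw [Matrix.mul_smul, trace_smul, hZ.2 Y hY, smul_zero]⟩

/-- Tensor product of operator subspaces, spanned by Kronecker products. -/
noncomputable def tensorSub {ι κ : Type} [Fintype ι] [DecidableEq ι]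
    [Fintype κ] [DecidableEq κ]
    (P : Submodule ℝ (Matrix ι ι ℂ)) (Q : Submodule ℝ (Matrix κ κ ℂ)) :
    Submodule ℝ (Matrix (ι × κ) (ι × κ) ℂ) :=
  Submodule.span ℝ {A | ∃ X ∈ P, ∃ Y ∈ Q, A = X ⊗ₖ Y}

/-- The one-dimensional subspace `L_e` spanned by the identity. -/
noncomputable def idSub (ι : Type) [Fintype ι] [DecidableEq ι] :
    Submodule ℝ (Matrix ι ι ℂ) :=
  Submodule.span ℝ {(1 : Matrix ι ι ℂ)}

/-- The subspace `Δ_x` of traceless Hermitian operators characterizing the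
deterministic events of type `x`:
`Δ_A = Traceless(H_A)` for elementary `A`, and
`Δ_{x→y} = [Herm(H_x) ⊗ Δ_y] ⊕ [Δ̄_x ⊗ Δ_y^⊥]`, where `Δ̄_x` is the complement of
`Δ_x` inside the traceless Hermitian operators and `Δ_y^⊥` its orthogonal
complement inside the Hermitian operators. -/
noncomputable def Delta : (x : QT) → Submodule ℝ (Matrix (Idx x) (Idx x) ℂ)
  | .elem n => tlHermSub (Fin n)
  | .arrow x y =>
      (tensorSub (hermSub (Idx x)) (Delta y) ⊔
        tensorSub (perpWithin (Delta x) (tlHermSub (Idx x)))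
          (perpWithin (Delta y) (hermSub (Idx y))) :
        Submodule ℝ (Matrix (Idx x × Idx y) (Idx x × Idx y) ℂ))

/-- The normalization constant `λ_x`: `λ_A = 1/d_A`, `λ_{x→y} = λ_y/(d_x λ_x)`. -/
noncomputable def lam : QT → ℝ
  | .elem n => 1 / n
  | .arrow x y => lam y / (Fintype.card (Idx x) * lam x)

/-- All elementary systems occurring in `x` have nonzero dimension. -/
def posdims : QT → Prop
  | .elem n => 0 < n
  | .arrow x y => posdims x ∧ posdims y

/-- The product `∏_i d_{A_i}^{-K_x(A_i)}` over the elementary types occurring in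
`x`: the Boolean argument records the parity `K` of the number of arrows and open
parentheses to the right of the current subexpression; it is flipped on the input
(left) side of each arrow, and an elementary leaf contributes `d⁻¹` when the
parity is odd and `1` when it is even. -/
noncomputable def leafProd : QT → Bool → ℝ
  | .elem n, s => if s then (n : ℝ)⁻¹ else 1
  | .arrow x y, s => leafProd x (!s) * leafProd y s

/-! Both claims are proved by induction on the type. The two parities of `leafProd` are tied by
`leafProd x true * leafProd x false = 1 / d_x`, which is exactly what turns the recursion
`λ_{x→y} = λ_y / (d_x λ_x)` into the product formula. For determinism one proves simultaneously
that every deterministic event of type `x` has trace `d_x λ_x`: testing `R ∈ Det (x → y)` against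
`λ_x I_x` fixes `Tr R`, and feeding any `S ∈ Det x` into `λ_{x→y} I` returns
`λ_{x→y} (Tr S) I = λ_y I`. -/

section PartialTrace

variable {ι κ : Type} [Fintype ι]

lemma ptrA_smul (c : ℂ) (M : Matrix (ι × κ) (ι × κ) ℂ) : ptrA (c • M) = c • ptrA M := by
  ext k l
  simp [ptrA, Finset.mul_sum]

lemma trace_ptrA [Fintype κ] (M : Matrix (ι × κ) (ι × κ) ℂ) : (ptrA M).trace = M.trace := by
  simp only [ptrA, Matrix.trace, Matrix.diag, Fintype.sum_prod_type]
  exact Finset.sum_comm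

lemma ptrA_transpose_kronecker_one [DecidableEq κ] (S : Matrix ι ι ℂ) :
    ptrA (Sᵀ ⊗ₖ (1 : Matrix κ κ ℂ)) = S.trace • 1 := by
  ext k l
  simp [ptrA, Matrix.trace, Finset.sum_mul]

variable [DecidableEq ι] [Fintype κ] [DecidableEq κ]

lemma ptrA_smul_one_kronecker_one_mul (c : ℂ) (R : Matrix (ι × κ) (ι × κ) ℂ) :
    ptrA (((c • 1 : Matrix ι ι ℂ)ᵀ ⊗ₖ (1 : Matrix κ κ ℂ)) * R) = c • ptrA R := by
  rw [transpose_smul, transpose_one, smul_kronecker, one_kronecker_one, smul_mul_assoc, one_mul,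
    ptrA_smul]

lemma ptrA_transpose_kronecker_one_mul_smul_one (S : Matrix ι ι ℂ) (c : ℂ) :
    ptrA ((Sᵀ ⊗ₖ (1 : Matrix κ κ ℂ)) * (c • 1 : Matrix (ι × κ) (ι × κ) ℂ)) =
      (c * S.trace) • 1 := by
  rw [mul_smul_comm, mul_one, ptrA_smul, ptrA_transpose_kronecker_one, smul_smul]

end PartialTrace

lemma posSemidef_ofReal_smul_one {ι : Type} [Fintype ι] [DecidableEq ι] {c : ℝ} (hc : 0 ≤ c) :
    ((c : ℂ) • (1 : Matrix ι ι ℂ)).PosSemidef :=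
  PosSemidef.one.smul (Complex.zero_le_real.mpr hc)

namespace QT

lemma card_idx_elem (n : ℕ) : Fintype.card (Idx (elem n)) = n :=
  Fintype.card_fin n

lemma card_idx_arrow (x y : QT) :
    Fintype.card (Idx (arrow x y)) = Fintype.card (Idx x) * Fintype.card (Idx y) :=
  Fintype.card_prod (Idx x) (Idx y)

lemma card_idx_pos : ∀ {x : QT}, posdims x → 0 < Fintype.card (Idx x)
  | elem n, h => by rwa [card_idx_elem]
  | arrow _ _, ⟨hx, hy⟩ => by
    rw [card_idx_arrow]
    exact Nat.mul_pos (card_idx_pos hx) (card_idx_pos hy)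

lemma leafProd_true_mul_leafProd_false :
    ∀ x : QT, leafProd x true * leafProd x false = (Fintype.card (Idx x) : ℝ)⁻¹
  | elem n => by simp [leafProd, card_idx_elem]
  | arrow x y => by
    simp only [leafProd, Bool.not_true, Bool.not_false, card_idx_arrow, Nat.cast_mul, mul_inv]
    rw [← leafProd_true_mul_leafProd_false x, ← leafProd_true_mul_leafProd_false y]
    ring

lemma leafProd_false_eq_inv {x : QT} (hx : posdims x) :
    leafProd x false = ((Fintype.card (Idx x) : ℝ) * leafProd x true)⁻¹ := by
  have hdx : (Fintype.card (Idx x) : ℝ) ≠ 0 := by exact_mod_cast (card_idx_pos hx).ne'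
  refine eq_inv_of_mul_eq_one_left ?_
  rw [mul_left_comm, mul_comm _ (leafProd x true), leafProd_true_mul_leafProd_false,
    mul_inv_cancel₀ hdx]

lemma lam_eq_leafProd : ∀ {x : QT}, posdims x → lam x = leafProd x true
  | elem n, _ => by simp [lam, leafProd]
  | arrow x y, ⟨hx, hy⟩ => by
    rw [lam, leafProd, Bool.not_true, leafProd_false_eq_inv hx, lam_eq_leafProd hx,
      lam_eq_leafProd hy, div_eq_inv_mul]

lemma lam_pos : ∀ {x : QT}, posdims x → 0 < lam x
  | elem n, hn => by
    rw [lam]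
    exact one_div_pos.2 (Nat.cast_pos.2 hn)
  | arrow _ _, ⟨hx, hy⟩ => by
    have := card_idx_pos hx
    have := lam_pos hx
    have := lam_pos hy
    rw [lam]
    positivity

lemma mem_Det_elem {n : ℕ} {R : Matrix (Fin n) (Fin n) ℂ} :
    R ∈ Det (elem n) ↔ R.PosSemidef ∧ R.trace = 1 :=
  Iff.rfl

lemma mem_Det_arrow {x y : QT} {R : Matrix (Idx x × Idx y) (Idx x × Idx y) ℂ} :
    R ∈ Det (arrow x y) ↔
      R.PosSemidef ∧ ∀ S ∈ Det x, ptrA ((Sᵀ ⊗ₖ (1 : Matrix (Idx y) (Idx y) ℂ)) * R) ∈ Det y :=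
  Iff.rfl

lemma trace_eq_of_mem_Det_elem {n : ℕ} (hn : 0 < n) {R : Matrix (Fin n) (Fin n) ℂ}
    (hR : R ∈ Det (elem n)) : R.trace = Fintype.card (Idx (elem n)) * (lam (elem n) : ℂ) := by
  have : (n : ℂ) ≠ 0 := by exact_mod_cast hn.ne'
  rw [(mem_Det_elem.1 hR).2, card_idx_elem, lam]
  push_cast
  field_simp

lemma smul_one_mem_Det_elem {n : ℕ} (hn : 0 < n) :
    (lam (elem n) : ℂ) • (1 : Matrix (Fin n) (Fin n) ℂ) ∈ Det (elem n) := by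
  have : (n : ℂ) ≠ 0 := by exact_mod_cast hn.ne'
  refine mem_Det_elem.2 ⟨posSemidef_ofReal_smul_one (lam_pos (x := elem n) hn).le, ?_⟩
  rw [trace_smul, trace_one, Fintype.card_fin, smul_eq_mul, lam]
  push_cast
  field_simp

lemma trace_eq_of_mem_Det_arrow {x y : QT} (hx : posdims x)
    (hdet : (lam x : ℂ) • (1 : Matrix (Idx x) (Idx x) ℂ) ∈ Det x)
    (htr : ∀ T ∈ Det y, T.trace = Fintype.card (Idx y) * (lam y : ℂ))
    {R : Matrix (Idx x × Idx y) (Idx x × Idx y) ℂ} (hR : R ∈ Det (arrow x y)) :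
    R.trace = Fintype.card (Idx (arrow x y)) * (lam (arrow x y) : ℂ) := by
  have h := htr _ ((mem_Det_arrow.1 hR).2 _ hdet)
  rw [ptrA_smul_one_kronecker_one_mul, trace_smul, trace_ptrA, smul_eq_mul] at h
  have : (lam x : ℂ) ≠ 0 := by exact_mod_cast (lam_pos hx).ne'
  have : (Fintype.card (Idx x) : ℂ) ≠ 0 := by exact_mod_cast (card_idx_pos hx).ne'
  rw [card_idx_arrow, lam]
  push_cast
  field_simp
  linear_combination h

lemma smul_one_mem_Det_arrow {x y : QT} (hx : posdims x) (hy : posdims y)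
    (htr : ∀ S ∈ Det x, S.trace = Fintype.card (Idx x) * (lam x : ℂ))
    (hdet : (lam y : ℂ) • (1 : Matrix (Idx y) (Idx y) ℂ) ∈ Det y) :
    (lam (arrow x y) : ℂ) • (1 : Matrix (Idx x × Idx y) (Idx x × Idx y) ℂ) ∈ Det (arrow x y) := by
  refine mem_Det_arrow.2 ⟨posSemidef_ofReal_smul_one (lam_pos (x := arrow x y) ⟨hx, hy⟩).le,
    fun S hS => ?_⟩
  have : (lam x : ℂ) ≠ 0 := by exact_mod_cast (lam_pos hx).ne'
  have : (Fintype.card (Idx x) : ℂ) ≠ 0 := by exact_mod_cast (card_idx_pos hx).ne'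
  rw [ptrA_transpose_kronecker_one_mul_smul_one]
  convert hdet using 2
  rw [htr S hS, lam]
  push_cast
  field_simp

theorem trace_eq_of_mem_Det_and_smul_one_mem_Det : ∀ {x : QT}, posdims x →
    (∀ S ∈ Det x, S.trace = Fintype.card (Idx x) * (lam x : ℂ)) ∧
      (lam x : ℂ) • (1 : Matrix (Idx x) (Idx x) ℂ) ∈ Det x
  | elem _, hn => ⟨fun _ => trace_eq_of_mem_Det_elem hn, smul_one_mem_Det_elem hn⟩
  | arrow _ _, ⟨hx, hy⟩ =>
    have ihx := trace_eq_of_mem_Det_and_smul_one_mem_Det hx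
    have ihy := trace_eq_of_mem_Det_and_smul_one_mem_Det hy
    ⟨fun _ => trace_eq_of_mem_Det_arrow hx ihx.2 ihy.1, smul_one_mem_Det_arrow hx hy ihx.1 ihy.2⟩

end QT

/-- `λ_x = ∏_i d_{A_i}^{-K_x(A_i)}`, and `λ_x I_x` is a deterministic event of
type `x`. -/
theorem lam_eq_leafProd_and_smul_one_det (x : QT) (hx : posdims x) :
    lam x = leafProd x true ∧
    ((lam x : ℂ) • (1 : Matrix (Idx x) (Idx x) ℂ)) ∈ Det x :=
  ⟨QT.lam_eq_leafProd hx, (QT.trace_eq_of_mem_Det_and_smul_one_mem_Det hx).2⟩
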